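/- (Necessity in Theorem 1.) Let r ≥ 1 and let Θ ⊆ ℝ^r be a nonempty open convex cone. For each θ ∈ Θ let f_θ be a probability mass function on ℕ whose pgf Φ(t, θ) = Σ_n f_θ(n) t^n extends to a function of t that is C^∞ on (−1, 1] with the i-th one-sided derivative of log Φ(·, θ) at t = 1 equal to θ_i for i = 1, …, r (so the family is parameterized by its first r factorial cumulants), and assume θ ↦ Φ(t, θ) is continuous for each fixed t. Suppose the family is closed under addition, i.e., f_{θ₁} * f_{θ₂} = f_{θ₁+θ₂} for all θ₁, θ₂ ∈ Θ, and closed under binomial subsampling, i.e., for every θ ∈ Θ and p ∈ (0,1] there exists θ' ∈ Θ with T_p f_θ = f_{θ'}. Then Φ(t, θ) = exp(Σ_{i=1}^r θ_i (t−1)^i / i!) for all θ ∈ Θ and t ∈ (−1, 1]; that is, every member of the family is an r-th order univariate Hermite distribution. -/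

import Mathlib

/-!
Multiplying pgfs turns closure under addition into additivity of `θ ↦ log Φ(t, θ)` on the cone,
so by continuity `log Φ(t, θ) = a(t) ⬝ᵥ θ` for `t ∈ (0, 1]`. Thinning sends the pgf at `t` to the
pgf at `1 - p + p t` and, by the chain rule, scales the `i`-th factorial cumulant by `p ^ i`;
comparing coefficients gives `a_i(1 - p + p t) = p ^ i a_i(t)`, whose solutions are
`a_i(t) = c_i (t - 1) ^ i`. Differentiating at `t = 1` gives `c_i = 1 / i!`, and the identity
extends from `(0, 1]` to `(-1, 1]` by analytic continuation of the pgf.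
-/

open scoped BigOperators ENNReal

def IsPMF (f : ℕ → ℝ) : Prop := (∀ n, 0 ≤ f n) ∧ HasSum f 1

/-- The binomial subsampling (independent `p`-thinning) of `f`:
`(T_p f)(m) = ∑_{n ≥ m} f(n) * C(n,m) * p^m * (1-p)^(n-m)` (written with `n = m + k`). -/
noncomputable def thin (p : ℝ) (f : ℕ → ℝ) : ℕ → ℝ :=
  fun m => ∑' k : ℕ, f (m + k) * ((m + k).choose m : ℝ) * p ^ m * (1 - p) ^ k

open Finset Topology

namespace IsPMF

variable {f : ℕ → ℝ}

theorem le_one (hf : IsPMF f) (n : ℕ) : f n ≤ 1 :=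
  hf.2.tsum_eq ▸ hf.2.summable.le_tsum n fun m _ => hf.1 m

theorem summable_norm_mul_pow (hf : IsPMF f) {t : ℝ} (ht : |t| ≤ 1) :
    Summable fun n => ‖f n * t ^ n‖ := by
  refine hf.2.summable.of_nonneg_of_le (fun n => norm_nonneg _) fun n => ?_
  rw [norm_mul, norm_pow, Real.norm_of_nonneg (hf.1 n)]
  exact mul_le_of_le_one_right (hf.1 n) (pow_le_one₀ (norm_nonneg t) ht)

theorem summable_mul_pow (hf : IsPMF f) {t : ℝ} (ht : |t| ≤ 1) :
    Summable fun n => f n * t ^ n :=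
  (hf.summable_norm_mul_pow ht).of_norm

theorem tsum_mul_pow_pos (hf : IsPMF f) {t : ℝ} (ht : t ∈ Set.Ioc 0 1) :
    0 < ∑' n, f n * t ^ n := by
  obtain ⟨n, hn⟩ : ∃ n, 0 < f n := by
    by_contra! h
    have : f = 0 := funext fun n => le_antisymm (h n) (hf.1 n)
    simpa [this] using hf.2.tsum_eq
  exact (hf.summable_mul_pow (abs_le.2 ⟨by linarith [ht.1], ht.2⟩)).tsum_pos
    (fun m => mul_nonneg (hf.1 m) (pow_nonneg ht.1.le m)) n (mul_pos hn (pow_pos ht.1 n))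

theorem tsum_conv_mul_pow {g : ℕ → ℝ} (hf : IsPMF f) (hg : IsPMF g) {t : ℝ} (ht : |t| ≤ 1) :
    ∑' n, (∑ j ∈ range (n + 1), f j * g (n - j)) * t ^ n
      = (∑' n, f n * t ^ n) * ∑' n, g n * t ^ n := by
  rw [tsum_mul_tsum_eq_tsum_sum_range_of_summable_norm (hf.summable_norm_mul_pow ht)
    (hg.summable_norm_mul_pow ht)]
  refine tsum_congr fun n => ?_
  rw [Finset.sum_mul]
  refine Finset.sum_congr rfl fun j hj => ?_
  rw [← pow_mul_pow_sub t (Nat.lt_succ_iff.mp (mem_range.mp hj))]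
  ring

theorem hasSum_thin_mul_pow (hf : IsPMF f) {p t : ℝ} (hp : p ∈ Set.Icc (0 : ℝ) 1)
    (ht : t ∈ Set.Icc (0 : ℝ) 1) :
    HasSum (fun m => thin p f m * t ^ m) (∑' n, f n * (1 - p + p * t) ^ n) := by
  obtain ⟨hp0, hp1⟩ := hp
  obtain ⟨ht0, ht1⟩ := ht
  set F : ℕ × ℕ → ℝ := fun x =>
    f (x.1 + x.2) * ((x.1 + x.2).choose x.1 : ℝ) * p ^ x.1 * (1 - p) ^ x.2 * t ^ x.1
  have hF0 : 0 ≤ F := fun x => by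
    have := hf.1 (x.1 + x.2)
    have := sub_nonneg.2 hp1
    simp only [Pi.zero_apply, F]
    positivity
  -- Summed along the antidiagonal `m + k = n`, the double series is a binomial expansion.
  have hfiber : ∀ n : ℕ, ∑ x ∈ antidiagonal n, F x = f n * (1 - p + p * t) ^ n := fun n => by
    rw [show 1 - p + p * t = p * t + (1 - p) by ring, (Commute.all _ _).add_pow', Finset.mul_sum]
    refine Finset.sum_congr rfl fun x hx => ?_
    rw [← mem_antidiagonal.mp hx, nsmul_eq_mul]
    ring
  have hs : |1 - p + p * t| ≤ 1 := abs_le.2 ⟨by nlinarith, by nlinarith⟩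
  set e := Finset.HasAntidiagonal.sigmaAntidiagonalEquivProd (A := ℕ)
  have hrow : ∀ n, ∑' x : antidiagonal n, F (e ⟨n, x⟩) = f n * (1 - p + p * t) ^ n := fun n => by
    rw [tsum_fintype]
    exact (Finset.sum_coe_sort _ F).trans (hfiber n)
  have hsum : Summable (F ∘ e) := by
    refine (summable_sigma_of_nonneg fun x => hF0 _).2 ⟨fun n => Summable.of_finite, ?_⟩
    simp only [hrow]
    exact hf.summable_mul_pow hs
  have hF : HasSum F (∑' n, f n * (1 - p + p * t) ^ n) := by
    rw [← e.hasSum_iff, ← tsum_congr hrow]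
    convert hsum.hasSum using 1
    exact (hsum.tsum_sigma' fun n => Summable.of_finite).symm
  refine hF.prod_fiberwise fun m => ?_
  simpa only [thin, ← tsum_mul_right] using (hF.summable.prod_factor m).hasSum

theorem analyticOnNhd_tsum_mul_pow (hf : IsPMF f) :
    AnalyticOnNhd ℝ (fun x => ∑' n, f n * x ^ n) (Metric.ball 0 1) := by
  set P := FormalMultilinearSeries.ofScalars ℝ f
  have hP : 1 ≤ P.radius := by
    have := P.le_radius_of_bound 1 (r := 1) fun n => by
      simpa [P, FormalMultilinearSeries.ofScalars_norm, abs_of_nonneg (hf.1 n)] using hf.le_one n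
    simpa using this
  have hsum : P.sum = fun x => ∑' n, f n * x ^ n :=
    FormalMultilinearSeries.ofScalarsSum_eq_tsum f
  intro x hx
  rw [← hsum]
  refine (P.hasFPowerSeriesOnBall (one_pos.trans_le hP)).analyticAt_of_mem
    (Metric.eball_subset_eball hP ?_)
  simpa [edist_dist, ENNReal.ofReal_lt_one] using hx

theorem tsum_mul_pow_eq_of_eqOn_Ioc (hf : IsPMF f) {g : ℝ → ℝ}
    (hg : AnalyticOnNhd ℝ g (Metric.ball 0 1))
    (h : ∀ t ∈ Set.Ioc (0 : ℝ) 1, ∑' n, f n * t ^ n = g t) :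
    ∀ t ∈ Set.Ioc (-1 : ℝ) 1, ∑' n, f n * t ^ n = g t := by
  intro t ht
  rcases lt_or_ge 0 t with h0 | h0
  · exact h t ⟨h0, ht.2⟩
  refine hf.analyticOnNhd_tsum_mul_pow.eqOn_of_preconnected_of_eventuallyEq hg
    (convex_ball 0 1).isPreconnected (z₀ := 1 / 2) (by norm_num) ?_ ?_
  · filter_upwards [Ioo_mem_nhds one_half_pos one_half_lt_one] with x hx using h x ⟨hx.1, hx.2.le⟩
  · rw [Real.ball_eq_Ioo, zero_sub, zero_add]
    exact ⟨ht.1, by linarith⟩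

end IsPMF

section Cone

variable {E : Type*} [NormedAddCommGroup E] [NormedSpace ℝ E] {Θ : Set E}

theorem Convex.add_mem_of_smul_mem (hconv : Convex ℝ Θ)
    (hcone : ∀ c : ℝ, 0 < c → ∀ θ ∈ Θ, c • θ ∈ Θ) {a b : E} (ha : a ∈ Θ) (hb : b ∈ Θ) :
    a + b ∈ Θ := by
  have h := hcone 2 two_pos _ (hconv ha hb one_half_pos.le one_half_pos.le (add_halves 1))
  rwa [smul_add, smul_smul, smul_smul, mul_one_div_cancel two_ne_zero, one_smul, one_smul] at h

theorem IsOpen.exists_sub_eq_of_smul_mem (hopen : IsOpen Θ) (hne : Θ.Nonempty)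
    (hcone : ∀ c : ℝ, 0 < c → ∀ θ ∈ Θ, c • θ ∈ Θ) (v : E) : ∃ a ∈ Θ, ∃ b ∈ Θ, a - b = v := by
  obtain ⟨θ₀, hθ₀⟩ := hne
  have hnear : ∀ᶠ ε in 𝓝[>] (0 : ℝ), θ₀ + ε • v ∈ Θ := by
    refine nhdsWithin_le_nhds (ContinuousAt.preimage_mem_nhds (by fun_prop) ?_)
    simpa using hopen.mem_nhds hθ₀
  obtain ⟨ε, hε, hεpos⟩ := (hnear.and self_mem_nhdsWithin).exists
  refine ⟨ε⁻¹ • (θ₀ + ε • v), hcone _ (inv_pos.2 hεpos) _ hε, ε⁻¹ • θ₀,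
    hcone _ (inv_pos.2 hεpos) _ hθ₀, ?_⟩
  rw [smul_add, add_sub_cancel_left, smul_smul, inv_mul_cancel₀ hεpos.ne', one_smul]

theorem exists_continuousLinearMap_eqOn_of_additive (hopen : IsOpen Θ) (hne : Θ.Nonempty)
    (hcone : ∀ c : ℝ, 0 < c → ∀ θ ∈ Θ, c • θ ∈ Θ) (hadd_mem : ∀ a ∈ Θ, ∀ b ∈ Θ, a + b ∈ Θ)
    {g : E → ℝ} (hadd : ∀ a ∈ Θ, ∀ b ∈ Θ, g (a + b) = g a + g b) (hcont : ContinuousOn g Θ) :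
    ∃ ℓ : E →L[ℝ] ℝ, Set.EqOn ℓ g Θ := by
  choose a ha b hb hab using hopen.exists_sub_eq_of_smul_mem hne hcone
  -- `G (a - b) := g a - g b` for `a, b ∈ Θ`; additivity makes this independent of the splitting.
  have hwd : ∀ x ∈ Θ, ∀ y ∈ Θ, ∀ x' ∈ Θ, ∀ y' ∈ Θ, x - y = x' - y' →
      g x - g y = g x' - g y' := fun x hx y hy x' hx' y' hy' h => by
    have : x + y' = x' + y := by rw [← sub_eq_sub_iff_add_eq_add]; exact h
    linarith [hadd x hx y' hy', hadd x' hx' y hy, congrArg g this]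
  obtain ⟨θ₀, hθ₀⟩ := hne
  let G : E →+ ℝ :=
    { toFun := fun v => g (a v) - g (b v)
      map_zero' := by
        rw [hwd _ (ha 0) _ (hb 0) _ hθ₀ _ hθ₀ (by rw [hab, sub_self]), sub_self]
      map_add' := fun v w => by
        rw [hwd _ (ha _) _ (hb _) _ (hadd_mem _ (ha v) _ (ha w)) _ (hadd_mem _ (hb v) _ (hb w))
          (by rw [hab, add_sub_add_comm, hab, hab]), hadd _ (ha v) _ (ha w),
          hadd _ (hb v) _ (hb w)]
        ring }
  have hG : ∀ v, θ₀ + v ∈ Θ → G v = g (θ₀ + v) - g θ₀ := fun v hv =>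
    hwd _ (ha v) _ (hb v) _ hv _ hθ₀ (by rw [hab, add_sub_cancel_left])
  have hGcont : Continuous G := by
    refine continuous_of_continuousAt_zero G ?_
    have hθ₀v : ∀ᶠ v in 𝓝 (0 : E), θ₀ + v ∈ Θ := by
      refine ContinuousAt.preimage_mem_nhds (by fun_prop) ?_
      simpa using hopen.mem_nhds hθ₀
    refine ContinuousAt.congr ?_ (hθ₀v.mono fun v hv => (hG v hv).symm)
    exact ((hcont.continuousAt (hopen.mem_nhds hθ₀)).comp_of_eq (by fun_prop)
      (add_zero θ₀)).sub continuousAt_const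
  refine ⟨G.toRealLinearMap hGcont, fun θ hθ => ?_⟩
  show g (a θ) - g (b θ) = g θ
  rw [hwd _ (ha θ) _ (hb θ) _ (hadd_mem _ hθ _ hθ) _ hθ (by rw [hab, add_sub_cancel_right]),
    hadd _ hθ _ hθ, add_sub_cancel_right]

end Cone

section Coordinates

variable {ι : Type*} [Fintype ι] {Θ : Set (ι → ℝ)}

theorem eq_of_dotProduct_eqOn (hopen : IsOpen Θ) (hne : Θ.Nonempty)
    (hcone : ∀ c : ℝ, 0 < c → ∀ θ ∈ Θ, c • θ ∈ Θ) {a b : ι → ℝ}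
    (h : ∀ θ ∈ Θ, a ⬝ᵥ θ = b ⬝ᵥ θ) : a = b := by
  classical
  funext i
  obtain ⟨x, hx, y, hy, hxy⟩ := hopen.exists_sub_eq_of_smul_mem hne hcone (Pi.single i 1)
  calc a i = a ⬝ᵥ Pi.single i 1 := by simp
    _ = b ⬝ᵥ Pi.single i 1 := by rw [← hxy, dotProduct_sub, dotProduct_sub, h x hx, h y hy]
    _ = b i := by simp

theorem exists_dotProduct_eqOn_of_additive (hopen : IsOpen Θ) (hne : Θ.Nonempty)
    (hcone : ∀ c : ℝ, 0 < c → ∀ θ ∈ Θ, c • θ ∈ Θ) (hadd_mem : ∀ a ∈ Θ, ∀ b ∈ Θ, a + b ∈ Θ)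
    {g : (ι → ℝ) → ℝ} (hadd : ∀ a ∈ Θ, ∀ b ∈ Θ, g (a + b) = g a + g b)
    (hcont : ContinuousOn g Θ) : ∃ a : ι → ℝ, ∀ θ ∈ Θ, g θ = a ⬝ᵥ θ := by
  classical
  obtain ⟨ℓ, hℓ⟩ :=
    exists_continuousLinearMap_eqOn_of_additive hopen hne hcone hadd_mem hadd hcont
  refine ⟨fun i => ℓ (Pi.single i 1), fun θ hθ => ?_⟩
  conv_lhs => rw [← hℓ hθ, pi_eq_sum_univ' θ]
  simp [dotProduct, mul_comm]

end Coordinates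

theorem exists_eq_mul_sub_one_pow_of_affine {A : ℝ → ℝ} {m : ℕ} (hm : m ≠ 0)
    (h : ∀ t ∈ Set.Ioc (0 : ℝ) 1, ∀ p ∈ Set.Ioc (0 : ℝ) 1, A (1 - p + p * t) = p ^ m * A t) :
    ∃ c, ∀ t ∈ Set.Ioc (0 : ℝ) 1, A t = c * (t - 1) ^ m := by
  have hA1 : A 1 = 0 := by
    have h1 := h 1 ⟨one_pos, le_rfl⟩ (1 / 2) ⟨one_half_pos, by norm_num⟩
    have : (1 / 2 : ℝ) ^ m < 1 := pow_lt_one₀ one_half_pos.le one_half_lt_one hm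
    norm_num at h1
    nlinarith
  have hshift : ∀ s ∈ Set.Ioo (0 : ℝ) 1, ∀ t ∈ Set.Ioo (0 : ℝ) 1, s ≤ t →
      A t * (1 - s) ^ m = A s * (1 - t) ^ m := by
    intro s hs t ht hst
    have hs1 : 0 < 1 - s := by linarith [hs.2]
    have hp : (1 - t) / (1 - s) ∈ Set.Ioc (0 : ℝ) 1 :=
      ⟨div_pos (by linarith [ht.2]) hs1, div_le_one_of_le₀ (by linarith) hs1.le⟩
    have h1 := h s ⟨hs.1, hs.2.le⟩ _ hp
    rw [show 1 - (1 - t) / (1 - s) + (1 - t) / (1 - s) * s = t by field_simp; ring,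
      div_pow] at h1
    rw [h1, div_mul_eq_mul_div, div_mul_cancel₀ _ (pow_ne_zero _ hs1.ne'), mul_comm]
  refine ⟨A (1 / 2) * (-2) ^ m, fun t ht => ?_⟩
  rcases ht.2.eq_or_lt with rfl | ht1
  · simp [hA1, hm]
  have hhalf : (1 / 2 : ℝ) ∈ Set.Ioo 0 1 := ⟨one_half_pos, one_half_lt_one⟩
  have key : A t * (1 - 1 / 2) ^ m = A (1 / 2) * (1 - t) ^ m := by
    rcases le_total t (1 / 2) with hle | hle
    · exact (hshift t ⟨ht.1, ht1⟩ _ hhalf hle).symm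
    · exact hshift _ hhalf t ⟨ht.1, ht1⟩ hle
  calc A t = A t * (1 - 1 / 2) ^ m * 2 ^ m := by rw [mul_assoc, ← mul_pow]; norm_num
    _ = A (1 / 2) * (-2) ^ m * (t - 1) ^ m := by
      rw [key, mul_assoc, ← mul_pow, mul_assoc, ← mul_pow]
      ring_nf

section IteratedDeriv

variable {𝕜 : Type*} [NontriviallyNormedField 𝕜]

theorem iteratedDerivWithin_comp_affine {g : 𝕜 → 𝕜} {s : Set 𝕜} {n : ℕ} (hs : UniqueDiffOn 𝕜 s)
    (hg : ContDiffOn 𝕜 n g s) {a p : 𝕜} (hmaps : Set.MapsTo (fun y => a + p * y) s s) {x : 𝕜}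
    (hx : x ∈ s) :
    iteratedDerivWithin n (fun y => g (a + p * y)) s x
      = p ^ n * iteratedDerivWithin n g s (a + p * x) := by
  induction n generalizing x with
  | zero => simp
  | succ n ih =>
    have hd : DifferentiableWithinAt 𝕜 (iteratedDerivWithin n g s) s (a + p * x) :=
      hg.differentiableOn_iteratedDerivWithin (Nat.cast_lt.mpr n.lt_succ_self) hs _ (hmaps hx)
    have haff : HasDerivWithinAt (fun y => a + p * y) p s x := by
      simpa using ((hasDerivWithinAt_id x s).const_mul p).const_add a
    rw [iteratedDerivWithin_succ, iteratedDerivWithin_succ,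
      derivWithin_congr (fun y hy => ih hg.of_succ hy) (ih hg.of_succ hx)]
    exact (((hd.hasDerivWithinAt.comp x haff hmaps).const_mul (p ^ n)).derivWithin
      (hs x hx)).trans (by ring)

theorem iteratedDerivWithin_sum_mul_sub_pow {ι : Type*} [Fintype ι] (b : ι → 𝕜) (m : ι → ℕ)
    (hm : m.Injective) {s : Set 𝕜} (hs : UniqueDiffOn 𝕜 s) {x : 𝕜} (hx : x ∈ s) (i : ι) :
    iteratedDerivWithin (m i) (fun t => ∑ j, b j * (t - x) ^ m j) s x
      = (m i).factorial * b i := by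
  classical
  rw [iteratedDerivWithin_eq_iteratedDeriv hs (by fun_prop) hx,
    iteratedDeriv_fun_sum (by fun_prop)]
  have hterm : ∀ j, iteratedDeriv (m i) (fun t => b j * (t - x) ^ m j) x
      = if i = j then (m i).factorial * b i else 0 := fun j => by
    rw [iteratedDeriv_const_mul _ (by fun_prop),
      iteratedDeriv_comp_sub_const (f := fun t => t ^ m j)]
    beta_reduce
    rw [sub_self, iteratedDeriv_fun_pow_zero]
    by_cases h : i = j
    · simp [h, mul_comm]
    · simp [h, hm.ne h]
  simp [hterm]

end IteratedDeriv

theorem iteratedDerivWithin_Ioc_eq {f : ℝ → ℝ} {a b x : ℝ} (ha : a < x) (hb : b < x) (n : ℕ) :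
    iteratedDerivWithin n f (Set.Ioc a x) x = iteratedDerivWithin n f (Set.Ioc b x) x := by
  simp only [iteratedDerivWithin_eq_iteratedFDerivWithin]
  rw [iteratedFDerivWithin_congr_set ?_ n]
  filter_upwards [Ioi_mem_nhds (max_lt ha hb)] with y hy
  obtain ⟨hay, hby⟩ := max_lt_iff.mp (Set.mem_Ioi.mp hy)
  exact propext ⟨fun h => ⟨hby, h.2⟩, fun h => ⟨hay, h.2⟩⟩

theorem one_sub_add_mul_mem_Ioc {p t : ℝ} (hp : p ∈ Set.Ioc (0 : ℝ) 1)
    (ht : t ∈ Set.Ioc (0 : ℝ) 1) :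
    1 - p + p * t ∈ Set.Ioc (0 : ℝ) 1 :=
  ⟨by nlinarith [hp.1, hp.2, ht.1], by nlinarith [hp.1, ht.2]⟩

theorem iteratedDerivWithin_comp_thinning_at_one {g h : ℝ → ℝ}
    (hg : ContDiffOn ℝ ((⊤ : ℕ∞) : WithTop ℕ∞) g (Set.Ioc 0 1)) {p : ℝ}
    (hp : p ∈ Set.Ioc (0 : ℝ) 1) (hh : Set.EqOn h (fun t => g (1 - p + p * t)) (Set.Ioc 0 1))
    (n : ℕ) :
    iteratedDerivWithin n h (Set.Ioc (-1) 1) 1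
      = p ^ n * iteratedDerivWithin n g (Set.Ioc (-1) 1) 1 := by
  have h1 : (1 : ℝ) ∈ Set.Ioc 0 1 := ⟨one_pos, le_rfl⟩
  rw [iteratedDerivWithin_Ioc_eq (by norm_num) one_pos, iteratedDerivWithin_Ioc_eq (a := -1)
    (by norm_num) one_pos, iteratedDerivWithin_congr hh h1,
    iteratedDerivWithin_comp_affine (uniqueDiffOn_Ioc 0 1) (hg.of_le (by exact_mod_cast le_top))
      (fun t ht => one_sub_add_mul_mem_Ioc hp ht) h1, mul_one, sub_add_cancel]

section Family

variable {r : ℕ} {Θ : Set (Fin r → ℝ)}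

theorem exists_eq_sum_mul_sub_one_pow_of_thinning (hopen : IsOpen Θ) (hne : Θ.Nonempty)
    (hcone : ∀ c : ℝ, 0 < c → ∀ θ ∈ Θ, c • θ ∈ Θ) (hadd_mem : ∀ a ∈ Θ, ∀ b ∈ Θ, a + b ∈ Θ)
    {L : ℝ → (Fin r → ℝ) → ℝ}
    (hadd : ∀ t ∈ Set.Ioc (0 : ℝ) 1, ∀ a ∈ Θ, ∀ b ∈ Θ, L t (a + b) = L t a + L t b)
    (hcont : ∀ t ∈ Set.Ioc (0 : ℝ) 1, ContinuousOn (L t) Θ)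
    (hthin : ∀ p ∈ Set.Ioc (0 : ℝ) 1, ∀ θ ∈ Θ, (fun i : Fin r => p ^ (i.1 + 1) * θ i) ∈ Θ ∧
      ∀ t ∈ Set.Ioc (0 : ℝ) 1, L (1 - p + p * t) θ = L t (fun i => p ^ (i.1 + 1) * θ i)) :
    ∃ c : Fin r → ℝ, ∀ t ∈ Set.Ioc (0 : ℝ) 1, ∀ θ ∈ Θ,
      L t θ = ∑ i, c i * θ i * (t - 1) ^ (i.1 + 1) := by
  choose! a ha using fun t ht =>
    exists_dotProduct_eqOn_of_additive hopen hne hcone hadd_mem (hadd t ht) (hcont t ht)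
  have hscale : ∀ t ∈ Set.Ioc (0 : ℝ) 1, ∀ p ∈ Set.Ioc (0 : ℝ) 1, ∀ i : Fin r,
      a (1 - p + p * t) i = p ^ (i.1 + 1) * a t i := by
    intro t ht p hp
    refine congrFun (eq_of_dotProduct_eqOn hopen hne hcone fun θ hθ => ?_)
    obtain ⟨hmem, hL⟩ := hthin p hp θ hθ
    rw [← ha _ (one_sub_add_mul_mem_Ioc hp ht) θ hθ, hL t ht, ha t ht _ hmem]
    exact Finset.sum_congr rfl fun i _ => by ring
  choose c hc using fun i : Fin r => exists_eq_mul_sub_one_pow_of_affine (A := fun t => a t i)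
    (Nat.add_one_ne_zero _) fun t ht p hp => hscale t ht p hp i
  refine ⟨c, fun t ht θ hθ => ?_⟩
  rw [ha t ht θ hθ, dotProduct]
  exact Finset.sum_congr rfl fun i _ => by rw [hc i t ht]; ring

theorem eq_inv_factorial_of_iteratedDerivWithin (hopen : IsOpen Θ) (hne : Θ.Nonempty)
    (hcone : ∀ c : ℝ, 0 < c → ∀ θ ∈ Θ, c • θ ∈ Θ) {L : ℝ → (Fin r → ℝ) → ℝ} {c : Fin r → ℝ}
    (hL : ∀ t ∈ Set.Ioc (0 : ℝ) 1, ∀ θ ∈ Θ, L t θ = ∑ i, c i * θ i * (t - 1) ^ (i.1 + 1))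
    (hcum : ∀ θ ∈ Θ, ∀ i : Fin r,
      iteratedDerivWithin (i.1 + 1) (fun t => L t θ) (Set.Ioc (-1 : ℝ) 1) 1 = θ i)
    (i : Fin r) : c i = ((i.1 + 1).factorial : ℝ)⁻¹ := by
  have hcoord : ∀ θ ∈ Θ, θ i = (i.1 + 1).factorial * (c i * θ i) := fun θ hθ => by
    refine (hcum θ hθ i).symm.trans ?_
    rw [iteratedDerivWithin_Ioc_eq (by norm_num) one_pos (b := 0),
      iteratedDerivWithin_congr (fun t ht => hL t ht θ hθ) ⟨one_pos, le_rfl⟩]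
    exact iteratedDerivWithin_sum_mul_sub_pow (fun j => c j * θ j) (fun j : Fin r => j.1 + 1)
      (fun j k h => Fin.ext (Nat.succ_injective h)) (uniqueDiffOn_Ioc 0 1) ⟨one_pos, le_rfl⟩ i
  obtain ⟨x, hx, y, hy, hxy⟩ := hopen.exists_sub_eq_of_smul_mem hne hcone (Pi.single i 1)
  have hi : x i - y i = 1 := by simpa using congrFun hxy i
  refine eq_inv_of_mul_eq_one_left ?_
  linear_combination (hcoord y hy - hcoord x hx) + (1 - c i * (i.1 + 1).factorial) * hi

theorem log_pgf_add {f : (Fin r → ℝ) → ℕ → ℝ} {Φ : ℝ → (Fin r → ℝ) → ℝ}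
    (hpmf : ∀ θ ∈ Θ, IsPMF (f θ))
    (hΦ : ∀ θ ∈ Θ, ∀ t ∈ Set.Ioc (-1 : ℝ) 1, Φ t θ = ∑' n : ℕ, f θ n * t ^ n)
    (hadd_mem : ∀ a ∈ Θ, ∀ b ∈ Θ, a + b ∈ Θ)
    (hadd : ∀ θ₁ ∈ Θ, ∀ θ₂ ∈ Θ,
      (fun n : ℕ => ∑ j ∈ range (n + 1), f θ₁ j * f θ₂ (n - j)) = f (θ₁ + θ₂))
    (hpos : ∀ θ ∈ Θ, ∀ t ∈ Set.Ioc (0 : ℝ) 1, 0 < Φ t θ) :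
    ∀ t ∈ Set.Ioc (0 : ℝ) 1, ∀ a ∈ Θ, ∀ b ∈ Θ,
      Real.log (Φ t (a + b)) = Real.log (Φ t a) + Real.log (Φ t b) := by
  intro t ht a ha b hb
  have ht' : t ∈ Set.Ioc (-1 : ℝ) 1 := ⟨by linarith [ht.1], ht.2⟩
  rw [← Real.log_mul (hpos a ha t ht).ne' (hpos b hb t ht).ne', hΦ _ (hadd_mem a ha b hb) t ht',
    hΦ a ha t ht', hΦ b hb t ht', ← hadd a ha b hb,
    (hpmf a ha).tsum_conv_mul_pow (hpmf b hb) (abs_le.2 ⟨ht'.1.le, ht.2⟩)]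

theorem log_pgf_thin {f : (Fin r → ℝ) → ℕ → ℝ} {Φ : ℝ → (Fin r → ℝ) → ℝ}
    (hpmf : ∀ θ ∈ Θ, IsPMF (f θ))
    (hΦ : ∀ θ ∈ Θ, ∀ t ∈ Set.Ioc (-1 : ℝ) 1, Φ t θ = ∑' n : ℕ, f θ n * t ^ n)
    (hsmooth : ∀ θ ∈ Θ, ContDiffOn ℝ ((⊤ : ℕ∞) : WithTop ℕ∞) (fun t => Φ t θ)
      (Set.Ioc (-1 : ℝ) 1))
    (hcum : ∀ θ ∈ Θ, ∀ i : Fin r,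
      iteratedDerivWithin (i.1 + 1) (fun t => Real.log (Φ t θ)) (Set.Ioc (-1 : ℝ) 1) 1 = θ i)
    (hthin : ∀ θ ∈ Θ, ∀ p ∈ Set.Ioc (0 : ℝ) 1, ∃ θ' ∈ Θ, thin p (f θ) = f θ')
    (hpos : ∀ θ ∈ Θ, ∀ t ∈ Set.Ioc (0 : ℝ) 1, 0 < Φ t θ) :
    ∀ p ∈ Set.Ioc (0 : ℝ) 1, ∀ θ ∈ Θ, (fun i : Fin r => p ^ (i.1 + 1) * θ i) ∈ Θ ∧
      ∀ t ∈ Set.Ioc (0 : ℝ) 1, Real.log (Φ (1 - p + p * t) θ)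
        = Real.log (Φ t (fun i => p ^ (i.1 + 1) * θ i)) := by
  intro p hp θ hθ
  have hsub : Set.Ioc (0 : ℝ) 1 ⊆ Set.Ioc (-1) 1 := Set.Ioc_subset_Ioc_left (by norm_num)
  obtain ⟨θ', hθ', hfθ'⟩ := hthin θ hθ p hp
  have hΦθ' : ∀ t ∈ Set.Ioc (0 : ℝ) 1, Φ t θ' = Φ (1 - p + p * t) θ := fun t ht => by
    rw [hΦ θ' hθ' t (hsub ht), hΦ θ hθ _ (hsub (one_sub_add_mul_mem_Ioc hp ht)), ← hfθ']
    exact ((hpmf θ hθ).hasSum_thin_mul_pow (Set.Ioc_subset_Icc_self hp)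
      (Set.Ioc_subset_Icc_self ht)).tsum_eq
  -- The parameter of the thinned law is read off from its factorial cumulants.
  have hθ'_eq : θ' = fun i => p ^ (i.1 + 1) * θ i := funext fun i => by
    rw [← hcum θ' hθ' i, ← hcum θ hθ i]
    exact iteratedDerivWithin_comp_thinning_at_one (((hsmooth θ hθ).mono hsub).log
      fun t ht => (hpos θ hθ t ht).ne') hp (fun t ht => by simp only [hΦθ' t ht]) _
  subst hθ'_eq
  exact ⟨hθ', fun t ht => by rw [hΦθ' t ht]⟩

end Family

theorem theorem1_necessity_general (r : ℕ) (Θ : Set (Fin r → ℝ)) (hne : Θ.Nonempty)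
    (hopen : IsOpen Θ) (hconv : Convex ℝ Θ)
    (hcone : ∀ c : ℝ, 0 < c → ∀ θ ∈ Θ, c • θ ∈ Θ)
    (f : (Fin r → ℝ) → ℕ → ℝ) (Φ : ℝ → (Fin r → ℝ) → ℝ)
    (hpmf : ∀ θ ∈ Θ, IsPMF (f θ))
    (hΦ : ∀ θ ∈ Θ, ∀ t ∈ Set.Ioc (-1 : ℝ) 1, Φ t θ = ∑' n : ℕ, f θ n * t ^ n)
    (hsmooth : ∀ θ ∈ Θ, ContDiffOn ℝ ((⊤ : ℕ∞) : WithTop ℕ∞) (fun t => Φ t θ)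
      (Set.Ioc (-1 : ℝ) 1))
    (hcum : ∀ θ ∈ Θ, ∀ i : Fin r,
      iteratedDerivWithin (i.1 + 1) (fun t => Real.log (Φ t θ)) (Set.Ioc (-1 : ℝ) 1) 1
        = θ i)
    (hcont : ∀ t ∈ Set.Ioc (-1 : ℝ) 1, ContinuousOn (fun θ => Φ t θ) Θ)
    (hadd : ∀ θ₁ ∈ Θ, ∀ θ₂ ∈ Θ,
      (fun n : ℕ => ∑ j ∈ Finset.range (n + 1), f θ₁ j * f θ₂ (n - j)) = f (θ₁ + θ₂))
    (hthin : ∀ θ ∈ Θ, ∀ p ∈ Set.Ioc (0 : ℝ) 1, ∃ θ' ∈ Θ, thin p (f θ) = f θ') :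
    ∀ θ ∈ Θ, ∀ t ∈ Set.Ioc (-1 : ℝ) 1,
      Φ t θ = Real.exp (∑ i : Fin r, θ i * (t - 1) ^ (i.1 + 1) / (i.1 + 1).factorial) := by
  have hsub : Set.Ioc (0 : ℝ) 1 ⊆ Set.Ioc (-1) 1 := Set.Ioc_subset_Ioc_left (by norm_num)
  have hadd_mem : ∀ a ∈ Θ, ∀ b ∈ Θ, a + b ∈ Θ := fun a ha b hb =>
    hconv.add_mem_of_smul_mem hcone ha hb
  have hpos : ∀ θ ∈ Θ, ∀ t ∈ Set.Ioc (0 : ℝ) 1, 0 < Φ t θ := fun θ hθ t ht =>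
    hΦ θ hθ t (hsub ht) ▸ (hpmf θ hθ).tsum_mul_pow_pos ht
  obtain ⟨c, hc⟩ := exists_eq_sum_mul_sub_one_pow_of_thinning hopen hne hcone hadd_mem
    (log_pgf_add hpmf hΦ hadd_mem hadd hpos)
    (fun t ht => (hcont t (hsub ht)).log fun θ hθ => (hpos θ hθ t ht).ne')
    (log_pgf_thin hpmf hΦ hsmooth hcum hthin hpos)
  have hc_val := eq_inv_factorial_of_iteratedDerivWithin hopen hne hcone hc hcum
  intro θ hθ t ht
  rw [hΦ θ hθ t ht]
  revert t
  refine (hpmf θ hθ).tsum_mul_pow_eq_of_eqOn_Ioc (fun x _ => ?_) fun s hs => ?_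
  · fun_prop
  rw [← hΦ θ hθ s (hsub hs), ← Real.exp_log (hpos θ hθ s hs), hc s hs θ hθ]
  exact congrArg Real.exp (Finset.sum_congr rfl fun i _ => by rw [hc_val]; ring)

/-- necessity in Theorem 1: let `f_θ` be a family of pmfs on `ℕ` indexed by
a nonempty open convex cone `Θ ⊆ ℝ^r`, whose pgfs extend to functions `Φ(·,θ)` that are
`C^∞` on `(-1,1]` with `i`-th one-sided derivative of `log Φ(·,θ)` at `t = 1` equal to
`θ_i` (parameterization by the first `r` factorial cumulants), with `Φ(t,·)` continuous on
`Θ`. If the family is closed under addition and under binomial subsampling, then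
`Φ(t,θ) = exp(∑_{i=1}^r θ_i (t-1)^i / i!)`, i.e. every member is an `r`-th order
univariate Hermite distribution. (Indices `i = 1, …, r` are encoded as `i.1 + 1` for
`i : Fin r`.) -/
theorem theorem1_necessity (r : ℕ) (hr : 1 ≤ r) (Θ : Set (Fin r → ℝ)) (hne : Θ.Nonempty)
    (hopen : IsOpen Θ) (hconv : Convex ℝ Θ)
    (hcone : ∀ c : ℝ, 0 < c → ∀ θ ∈ Θ, c • θ ∈ Θ)
    (f : (Fin r → ℝ) → ℕ → ℝ) (Φ : ℝ → (Fin r → ℝ) → ℝ)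
    (hpmf : ∀ θ ∈ Θ, IsPMF (f θ))
    (hΦ : ∀ θ ∈ Θ, ∀ t ∈ Set.Ioc (-1 : ℝ) 1, Φ t θ = ∑' n : ℕ, f θ n * t ^ n)
    (hsmooth : ∀ θ ∈ Θ, ContDiffOn ℝ ((⊤ : ℕ∞) : WithTop ℕ∞) (fun t => Φ t θ)
      (Set.Ioc (-1 : ℝ) 1))
    (hcum : ∀ θ ∈ Θ, ∀ i : Fin r,
      iteratedDerivWithin (i.1 + 1) (fun t => Real.log (Φ t θ)) (Set.Ioc (-1 : ℝ) 1) 1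
        = θ i)
    (hcont : ∀ t ∈ Set.Ioc (-1 : ℝ) 1, ContinuousOn (fun θ => Φ t θ) Θ)
    (hadd : ∀ θ₁ ∈ Θ, ∀ θ₂ ∈ Θ,
      (fun n : ℕ => ∑ j ∈ Finset.range (n + 1), f θ₁ j * f θ₂ (n - j)) = f (θ₁ + θ₂))
    (hthin : ∀ θ ∈ Θ, ∀ p ∈ Set.Ioc (0 : ℝ) 1, ∃ θ' ∈ Θ, thin p (f θ) = f θ') :
    ∀ θ ∈ Θ, ∀ t ∈ Set.Ioc (-1 : ℝ) 1,
      Φ t θ = Real.exp (∑ i : Fin r, θ i * (t - 1) ^ (i.1 + 1) / (i.1 + 1).factorial) :=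
  theorem1_necessity_general r Θ hne hopen hconv hcone f Φ hpmf hΦ hsmooth hcum hcont hadd hthin
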